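/- arXiv:2409.14779 — 3 statements merged into one kernel-verified Lean document; each statement's English description precedes it below -/
import Mathlib

section
/- With the setup of the previous statement (sequence of ETSs, slack bounds Ψ_k, tolerable delays Υ_k, additional capacities ω_k = min(Υ_{k+1}, Ψ_{k+1})), define ω = min over all k of ω_k. Then for every k, any single interference of magnitude at most ω occurring in S_k delays the start of S_{k+1} by at most Υ_{k+1}, so no job in S_{k+1} misses its deadline; i.e., the system tolerates any interference of magnitude ω without deadline misses in ETSs other than the one where the interference occurred. -/
/-- Theorem 2: with `ω = min_k ω_k` where `ω_k = min(Υ_{k+1}, Ψ_{k+1})`,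
any single interference of magnitude at most `ω` occurring in some ETS `S_k`
delays the start of `S_{k+1}` by at most `Υ_{k+1}`, so no job of an ETS other
than `S_k` misses its deadline. -/
theorem ets_robustness (m : ℕ) (hm : 2 ≤ m) (TH : ℝ)
    (α lam Υ Ψ ω : ℕ → ℝ)
    (hmono : ∀ k, 1 ≤ k → k < m → α k ≤ α (k + 1))
    (hlam : ∀ k, 1 ≤ k → k ≤ m → 0 ≤ lam k)
    (hfit : ∀ k, 1 ≤ k → k < m → α k + lam k ≤ α (k + 1))
    (hlast : α m + lam m ≤ TH)
    (hΥ : ∀ k, 1 ≤ k → k ≤ m → 0 ≤ Υ k)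
    (hΨm : Ψ m = TH - α m - lam m)
    (hΨ : ∀ k, 1 ≤ k → k < m → Ψ k = α (k + 1) + min (Υ (k + 1)) (Ψ (k + 1)) - α k - lam k)
    (hω : ∀ k, 1 ≤ k → k < m → ω k = min (Υ (k + 1)) (Ψ (k + 1)))
    (Ω : ℝ)
    (hΩ : Ω = (Finset.Ico 1 m).inf' (by simp; omega) ω) :
    ∀ k, 1 ≤ k → k < m → ∀ x : ℝ, 0 ≤ x → x ≤ Ω →
      max (α k + lam k + x) (α (k + 1)) - α (k + 1) ≤ Υ (k + 1) := by
  intro k hk1 hk2 x hx hxΩ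
  have hΩk : Ω ≤ ω k := by
    rw [hΩ]; exact Finset.inf'_le _ (by simp; omega)
  have hxΥ : x ≤ Υ (k + 1) := by
    have := hω k hk1 hk2
    have := min_le_left (Υ (k + 1)) (Ψ (k + 1))
    linarith
  have h1 : α k + lam k ≤ α (k + 1) := hfit k hk1 hk2
  have h2 : 0 ≤ Υ (k + 1) := hΥ (k + 1) (by omega) (by omega)
  have : max (α k + lam k + x) (α (k + 1)) ≤ α (k + 1) + Υ (k + 1) :=
    max_le (by linarith) (by linarith)
  linarith
end

section
/- Strengthened robustness: in the same ETS sequence setup, if an interference ω satisfies ω < min over all k of min(ω_k, Υ_k), then even the jobs in the ETS where the interference occurs meet their deadlines: for any k, an interference of magnitude ω in S_k delays jobs in S_k by at most Υ_k, so by Lemma 1 every job in S_k satisfies θ + C + ω ≤ d, and the start of every subsequent ETS S_j (j > k) is delayed by less than Υ_j. -/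
/-- Strengthened robustness: if the interference `ω` satisfies
`ω < min_k min(ω_k, Υ_k)`, then even the jobs of the ETS `k0` in which the
interference occurs meet their deadlines (`θ + C + ω ≤ d`), and the start of
every subsequent ETS is delayed by strictly less than its tolerable delay. -/
theorem ets_robustness_strong {J : Type*} (m : ℕ) (hm : 2 ≤ m) (TH : ℝ)
    (α lam Υ Ψ ωk : ℕ → ℝ) (G : ℕ → Finset J) (θ C d : J → ℝ)
    (hmono : ∀ k, 1 ≤ k → k < m → α k ≤ α (k + 1))
    (hlam : ∀ k, 1 ≤ k → k ≤ m → 0 ≤ lam k)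
    (hfit : ∀ k, 1 ≤ k → k < m → α k + lam k ≤ α (k + 1))
    (hlast : α m + lam m ≤ TH)
    -- `Υ_k` is the minimum slack `d - θ - C` over the jobs of `S_k` (Lemma 1)
    (hGne : ∀ k, 1 ≤ k → k ≤ m → (G k).Nonempty)
    (hΥdef : ∀ k (hk1 : 1 ≤ k) (hkm : k ≤ m),
      Υ k = (G k).inf' (hGne k hk1 hkm) (fun τ => d τ - θ τ - C τ))
    (hΥ : ∀ k, 1 ≤ k → k ≤ m → 0 ≤ Υ k)
    (hΨm : Ψ m = TH - α m - lam m)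
    (hΨ : ∀ k, 1 ≤ k → k < m → Ψ k = α (k + 1) + min (Υ (k + 1)) (Ψ (k + 1)) - α k - lam k)
    (hωk : ∀ k, 1 ≤ k → k < m → ωk k = min (Υ (k + 1)) (Ψ (k + 1)))
    (ω : ℝ) (hω0 : 0 ≤ ω)
    (hωlt : ∀ k, 1 ≤ k → k < m → ω < min (ωk k) (Υ k))
    -- a single interference of magnitude `ω` occurs in ETS `k0`
    (k0 : ℕ) (hk01 : 1 ≤ k0) (hk0m : k0 < m)
    (x : ℕ → ℝ) (hx : ∀ j, x j = if j = k0 then ω else 0)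
    -- transitive start delays of the ETSs
    (D : ℕ → ℝ) (hD1 : D 1 = 0)
    (hDrec : ∀ k, 1 ≤ k → k < m →
      D (k + 1) = max 0 (D k + x k - (α (k + 1) - α k - lam k))) :
    (∀ τ ∈ G k0, θ τ + C τ + ω ≤ d τ) ∧
      ∀ j, k0 < j → j ≤ m → D j < Υ j := by
  have hzero : ∀ k, 1 ≤ k → k ≤ k0 → D k = 0 := by
    intro k
    induction k with
    | zero => intro h; omega
    | succ n ih =>
      intro _ hle
      rcases Nat.eq_or_lt_of_le (Nat.one_le_iff_ne_zero.mpr (Nat.succ_ne_zero n)) with h1 | h1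
      · have : n = 0 := by omega
        subst this; exact hD1
      · have hn1 : 1 ≤ n := by omega
        have hnm : n < m := by omega
        have hnk0 : n ≠ k0 := by omega
        have hx0 : x n = 0 := by rw [hx]; simp [hnk0]
        have := hfit n hn1 hnm
        rw [hDrec n hn1 hnm, ih hn1 (by omega), hx0]
        rw [max_eq_left (by linarith)]
  have hle : ∀ j, k0 < j → j ≤ m → D j ≤ ω := by
    intro j
    induction j with
    | zero => intro h; omega
    | succ n ih =>
      intro hgt hlem
      have hn1 : 1 ≤ n := by omega
      have hnm : n < m := by omega
      have := hfit n hn1 hnm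
      rcases eq_or_ne n k0 with h | h
      · have hx1 : x n = ω := by rw [hx]; simp [h]
        rw [hDrec n hn1 hnm, hzero n hn1 (by omega), hx1]
        have : (0:ℝ) ≤ ω := hω0
        rw [max_le_iff]; constructor <;> linarith
      · have hx0 : x n = 0 := by rw [hx]; simp [h]
        have hDn := ih (by omega) (by omega)
        rw [hDrec n hn1 hnm, hx0]
        rw [max_le_iff]; constructor <;> linarith
  have hΥk0 : ω < Υ k0 := lt_of_lt_of_le (hωlt k0 hk01 hk0m) (min_le_right _ _)
  constructor
  · intro τ hτ
    have h1 : Υ k0 ≤ d τ - θ τ - C τ := by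
      rw [hΥdef k0 hk01 (le_of_lt hk0m)]
      exact Finset.inf'_le _ hτ
    linarith
  · intro j hj hjm
    have hDj := hle j hj hjm
    rcases Nat.lt_or_ge j m with hjm' | hjm'
    · have := lt_of_lt_of_le (hωlt j (by omega) hjm') (min_le_right _ _)
      linarith
    · have hjem : j = m := by omega
      have hm1 : 1 ≤ m - 1 := by omega
      have hm2 : m - 1 < m := by omega
      have hωm := lt_of_lt_of_le (hωlt (m-1) hm1 hm2) (min_le_left _ _)
      rw [hωk (m-1) hm1 hm2, Nat.sub_add_cancel (by omega)] at hωm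
      have := lt_of_lt_of_le hωm (min_le_left _ _)
      subst hjem; linarith
end

section
/- Chained S-Timer/B-Timer refresh: with an S-Timer of reset value α (reset at the start of each hyperperiod of length T^H, decremented each cycle, status = (current > 0)) whose status output drives the B-Timer's reset port (B-Timer with reset value λ, decremented each cycle while active), the B-Timer begins counting exactly α cycles after the hyperperiod start and its status is true precisely during cycles [α, α + min(λ, T^H − α)) of each hyperperiod; hence if α + λ ≤ T^H the ETS receives its full budget λ each hyperperiod starting at offset α. -/
/-- Chained S-Timer/B-Timer refresh: the S-Timer is reloaded to `α` at the
start of each hyperperiod (of length `T^H`) and decremented each cycle; while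
its status (`sVal > 0`) is true the B-Timer is held in reset at `λ`, and once
the S-Timer reaches `0` the B-Timer counts down each cycle.  Then the ETS is
active (S-Timer exhausted and budget remaining) precisely during the cycles
`[α, α + min λ (T^H - α))` of each hyperperiod; in particular, if
`α + λ ≤ T^H` the ETS receives its full budget `λ` each hyperperiod starting
at offset `α`. -/
theorem stimer_btimer_chain (TH α lam : ℕ) (hTH : 0 < TH) (hα : α ≤ TH)
    (sVal bVal : ℕ → ℕ)
    (hs0 : sVal 0 = α) (hb0 : bVal 0 = lam)
    (hsrec : ∀ t, sVal (t + 1) = if (t + 1) % TH = 0 then α else sVal t - 1)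
    (hbrec : ∀ t, bVal (t + 1) =
      if (t + 1) % TH = 0 then lam
      else if 0 < sVal t then lam else bVal t - 1) :
    (∀ t, (sVal t = 0 ∧ 0 < bVal t) ↔
        (α ≤ t % TH ∧ t % TH < α + min lam (TH - α))) ∧
      (α + lam ≤ TH →
        ∀ t, (sVal t = 0 ∧ 0 < bVal t) ↔ (α ≤ t % TH ∧ t % TH < α + lam)) := by
  have key : ∀ t, sVal t = α - t % TH ∧ bVal t = lam - (t % TH - α) := by
    intro t
    induction t with
    | zero => simp [hs0, hb0]
    | succ t ih =>
      obtain ⟨ihs, ihb⟩ := ih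
      by_cases h : (t + 1) % TH = 0
      · rw [hsrec, hbrec, if_pos h, if_pos h, h]; simp
      · have hr : (t + 1) % TH = t % TH + 1 := by
          have h1 : (t + 1) % TH = (t % TH + 1) % TH := (Nat.mod_add_mod t TH 1).symm
          have hlt : t % TH < TH := Nat.mod_lt _ hTH
          rcases eq_or_lt_of_le (Nat.succ_le_of_lt hlt) with heq | hlt2
          · exfalso; apply h; have heq2 : t % TH + 1 = TH := heq; rw [h1, heq2, Nat.mod_self]
          · rw [h1, Nat.mod_eq_of_lt hlt2]
        rw [hsrec, hbrec, if_neg h, if_neg h, hr, ihs, ihb]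
        constructor
        · omega
        · split_ifs <;> omega
  constructor
  · intro t
    obtain ⟨hs, hb⟩ := key t
    have hrt : t % TH < TH := Nat.mod_lt _ hTH
    rw [hs, hb]
    generalize t % TH = r at hrt ⊢
    omega
  · intro hle t
    obtain ⟨hs, hb⟩ := key t
    have hrt : t % TH < TH := Nat.mod_lt _ hTH
    rw [hs, hb]
    generalize t % TH = r at hrt ⊢
    omega
end
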